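/- arXiv:2104.09180 — 2 statements merged into one kernel-verified Lean document; each statement's English description precedes it below -/
import Mathlib

section
/- Assume g ≠ 1 (so g generates G) and let α ∈ ZMod p with h = g^α. Let n ∈ ℕ, v, v', r, s : Fin n → ZMod p, and t ∈ ZMod p. Set coin_j := g^{v j} · h^{r j} and coin'_j := g^{v' j} · h^{s j}, and suppose ∏_j coin'_j = (∏_j coin_j) · h^t. Then setting Δ := ∑_j v' j − ∑_j v j and S := ∑_j (s j − r j), we have Δ = α · (t − S); consequently, if Δ ≠ 0 then t − S ≠ 0 and α = Δ · (t − S)⁻¹. (Soundness core: any accepted finalization either satisfies the mod-p zero-sum constraint or reveals the discrete logarithm of h in base g.) -/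
/-!
Since `g` has prime order `p`, the map `a ↦ g ^ a.val` is an injective homomorphism from
`ZMod p` to `G`. Writing `h = g ^ α`, each coin is `g ^ (v j + α r j)`, so the accepted
finalization identity, read through this injective homomorphism, becomes the linear equation
`∑ v' + α ∑ s = ∑ v + α ∑ r + α t` over `ZMod p`, which is `Δ = α (t - S)`; when `Δ ≠ 0` this
can be solved for `α`.
-/

open Function

section ZModPow

variable {M : Type*} [Monoid M] {n : ℕ} {x : M}

theorem pow_zmod_val_add [NeZero n] (hx : x ^ n = 1) (a b : ZMod n) :
    x ^ (a + b).val = x ^ a.val * x ^ b.val := by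
  rw [ZMod.val_add, ← pow_eq_pow_mod _ hx, pow_add]

theorem pow_zmod_val_mul (hx : x ^ n = 1) (a b : ZMod n) :
    x ^ (a * b).val = (x ^ a.val) ^ b.val := by
  rw [ZMod.val_mul, ← pow_eq_pow_mod _ hx, pow_mul]

/-- A Pedersen commitment with `h = x ^ α` is a single power of `x`. -/
theorem pow_zmod_val_mul_pow_zmod_val [NeZero n] (hx : x ^ n = 1) (α a b : ZMod n) :
    x ^ a.val * (x ^ α.val) ^ b.val = x ^ (a + α * b).val := by
  rw [pow_zmod_val_add hx, pow_zmod_val_mul hx]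

theorem pow_zmod_val_injective [NeZero n] (hx : orderOf x = n) :
    Injective fun a : ZMod n => x ^ a.val := by
  intro a b (hab : x ^ a.val = x ^ b.val)
  have hfin : IsOfFinOrder x := orderOf_pos_iff.mp (hx ▸ NeZero.pos n)
  have hmod : a.val ≡ b.val [MOD orderOf x] := hfin.pow_eq_pow_iff_modEq.mp hab
  rw [hx] at hmod
  exact ZMod.val_injective n (hmod.eq_of_lt_of_lt (ZMod.val_lt a) (ZMod.val_lt b))

def zmodPowHom [NeZero n] (hx : x ^ n = 1) : Multiplicative (ZMod n) →* M where
  toFun a := x ^ a.toAdd.val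
  map_one' := by simp
  map_mul' a b := pow_zmod_val_add hx a.toAdd b.toAdd

end ZModPow

theorem pow_zmod_val_sum {M ι : Type*} [CommMonoid M] {n : ℕ} [NeZero n] {x : M}
    (hx : x ^ n = 1) (s : Finset ι) (f : ι → ZMod n) :
    x ^ (∑ i ∈ s, f i).val = ∏ i ∈ s, x ^ (f i).val := by
  calc x ^ (∑ i ∈ s, f i).val = zmodPowHom hx (.ofAdd (∑ i ∈ s, f i)) := rfl
    _ = ∏ i ∈ s, zmodPowHom hx (.ofAdd (f i)) := by rw [ofAdd_sum, map_prod]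
    _ = ∏ i ∈ s, x ^ (f i).val := rfl

theorem eq_mul_inv_of_eq_mul_of_ne_zero {K : Type*} [Field K] {a b c : K} (h : b = a * c)
    (hb : b ≠ 0) : c ≠ 0 ∧ a = b * c⁻¹ := by
  have hc : c ≠ 0 := by rintro rfl; exact hb (by rw [h, mul_zero])
  exact ⟨hc, (eq_mul_inv_iff_mul_eq₀ hc).2 h.symm⟩

/-- Soundness core: any accepted finalization either satisfies the mod-p
zero-sum constraint or reveals the discrete logarithm of `h` in base `g`. -/
theorem psc_soundness_core {p : ℕ} [Fact p.Prime] {G : Type*} [CommGroup G]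
    [Fintype G] (hG : Fintype.card G = p) (g h : G) (hg : g ≠ 1)
    (α : ZMod p) (hα : h = g ^ α.val)
    (n : ℕ) (v v' r s : Fin n → ZMod p) (t : ZMod p)
    (coin : Fin n → G) (hcoin : ∀ j, coin j = g ^ (v j).val * h ^ (r j).val)
    (coin' : Fin n → G) (hcoin' : ∀ j, coin' j = g ^ (v' j).val * h ^ (s j).val)
    (hfin : (∏ j, coin' j) = (∏ j, coin j) * h ^ t.val)
    (Δ : ZMod p) (hΔ : Δ = (∑ j, v' j) - (∑ j, v j))
    (S : ZMod p) (hS : S = ∑ j, (s j - r j)) :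
    Δ = α * (t - S) ∧ (Δ ≠ 0 → t - S ≠ 0 ∧ α = Δ * (t - S)⁻¹) := by
  have hgp : g ^ p = 1 := hG ▸ pow_card_eq_one
  have hord : orderOf g = p := orderOf_eq_prime hgp hg
  subst hα
  simp only [pow_zmod_val_mul_pow_zmod_val hgp] at hcoin hcoin'
  have key : ∑ j, (v' j + α * s j) = ∑ j, (v j + α * r j) + α * t := by
    refine pow_zmod_val_injective hord ?_
    dsimp only
    simp only [hcoin, hcoin'] at hfin
    rw [pow_zmod_val_add hgp, pow_zmod_val_sum hgp, pow_zmod_val_sum hgp, pow_zmod_val_mul hgp]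
    exact hfin
  have hlin : Δ = α * (t - S) := by
    simp only [Finset.sum_add_distrib, ← Finset.mul_sum] at key
    rw [hΔ, hS, Finset.sum_sub_distrib]
    linear_combination key
  exact ⟨hlin, eq_mul_inv_of_eq_mul_of_ne_zero hlin⟩
end

section
/- Let c, c_a ∈ G and x₁, x₂, f₁, f₂, za₁, za₂ ∈ ZMod p with x₁ ≠ x₂. If c^{x₁} · c_a = g^{f₁} · h^{za₁} and c^{x₂} · c_a = g^{f₂} · h^{za₂}, then c = g^{(f₁ − f₂)·(x₁ − x₂)⁻¹} · h^{(za₁ − za₂)·(x₁ − x₂)⁻¹}. (First extraction step in the special soundness of the sigma protocol proving that a Pedersen commitment commits to 0 or 1: two accepting transcripts with distinct challenges produce an explicit opening of c.) -/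
/-! Since `u ^ p = 1` for every `u`, the map `a ↦ u ^ a.val` turns the ring operations of
`ZMod p` into those of exponents. Dividing the two verification equations eliminates `c_a` and
leaves `c ^ (x₁ - x₂) = g ^ (f₁ - f₂) * h ^ (za₁ - za₂)`; as `x₁ - x₂` is a unit of the field
`ZMod p`, raising both sides to its inverse opens `c`. -/

section PowVal

variable {M : Type*} [Monoid M] {p : ℕ} {u : M}

theorem pow_eq_pow_of_natCast_eq (hu : u ^ p = 1) {m n : ℕ} (h : (m : ZMod p) = n) :
    u ^ m = u ^ n := by
  rw [← pow_mod_orderOf, ← pow_mod_orderOf u n]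
  exact congrArg _ (((ZMod.natCast_eq_natCast_iff _ _ _).mp h).of_dvd
    (orderOf_dvd_of_pow_eq_one hu))

variable [NeZero p]

theorem pow_val_add (hu : u ^ p = 1) (a b : ZMod p) :
    u ^ (a + b).val = u ^ a.val * u ^ b.val := by
  rw [← pow_add]
  exact pow_eq_pow_of_natCast_eq hu (by simp)

theorem pow_val_mul (hu : u ^ p = 1) (a b : ZMod p) :
    u ^ (a * b).val = (u ^ a.val) ^ b.val := by
  rw [← pow_mul]
  exact pow_eq_pow_of_natCast_eq hu (by simp)

theorem pow_val_sub {G : Type*} [Group G] {u : G} (hu : u ^ p = 1) (a b : ZMod p) :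
    u ^ (a - b).val = u ^ a.val / u ^ b.val :=
  eq_div_of_mul_eq' (by rw [← pow_val_add hu, sub_add_cancel])

end PowVal

theorem pow_val_pow_val_inv {M : Type*} [Monoid M] {p : ℕ} [Fact p.Prime] {u : M}
    (hu : u ^ p = 1) {d : ZMod p} (hd : d ≠ 0) : (u ^ d.val) ^ (d⁻¹).val = u := by
  rw [← pow_val_mul hu, mul_inv_cancel₀ hd, ZMod.val_one, pow_one]

/-- First extraction step in the special soundness of the sigma protocol
proving that a Pedersen commitment commits to 0 or 1: two accepting
transcripts with distinct challenges produce an explicit opening of `c`. -/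
theorem bit_sigma_extract_opening {p : ℕ} [Fact p.Prime] {G : Type*} [CommGroup G]
    [Fintype G] (hG : Fintype.card G = p) (g h : G)
    (c ca : G) (x₁ x₂ f₁ f₂ za₁ za₂ : ZMod p) (hx : x₁ ≠ x₂)
    (h₁ : c ^ x₁.val * ca = g ^ f₁.val * h ^ za₁.val)
    (h₂ : c ^ x₂.val * ca = g ^ f₂.val * h ^ za₂.val) :
    c = g ^ (((f₁ - f₂) * (x₁ - x₂)⁻¹)).val * h ^ (((za₁ - za₂) * (x₁ - x₂)⁻¹)).val := by
  have hexp : ∀ u : G, u ^ p = 1 := fun u => hG ▸ pow_card_eq_one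
  have hdiff : c ^ (x₁ - x₂).val = g ^ (f₁ - f₂).val * h ^ (za₁ - za₂).val := by
    rw [pow_val_sub (hexp c), pow_val_sub (hexp g), pow_val_sub (hexp h),
      ← mul_div_mul_right_eq_div _ _ ca, h₁, h₂, div_mul_div_comm]
  calc c = (c ^ (x₁ - x₂).val) ^ ((x₁ - x₂)⁻¹).val :=
        (pow_val_pow_val_inv (hexp c) (sub_ne_zero.mpr hx)).symm
    _ = _ := by rw [hdiff, mul_pow, ← pow_val_mul (hexp g), ← pow_val_mul (hexp h)]
end
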